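/- arXiv:1404.0542 — 2 statements merged into one kernel-verified Lean document; each statement's English description precedes it below -/
import Mathlib

section
/- Let (T,f) be a basic tree game. For every node i ∈ N(T), the Shapley value of i satisfies Sh_i = Σ_{j ∈ N(T_i)} 1/(depth(j,T) + 1), where T_i is the subtree of T rooted at i. -/
open scoped Classical

/-- A rooted tree on a finite node set `V`, given by a parent map that fixes the
root and eventually maps every node to the root. -/
structure ReferralTree (V : Type*) [Fintype V] [DecidableEq V] where
  parent : V → V
  root : V
  parent_root : parent root = root
  reaches_root : ∀ v : V, ∃ k : ℕ, parent^[k] v = root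

namespace ReferralTree

variable {V : Type*} [Fintype V] [DecidableEq V]

/-- `anc T i` : the set of ancestors of `i` (nodes on the path from `i` to the
root, excluding `i` itself). -/
noncomputable def anc (T : ReferralTree V) (i : V) : Finset V :=
  Finset.univ.filter (fun j => j ≠ i ∧ ∃ k : ℕ, T.parent^[k] i = j)

/-- `trimN T C` : the node set of the trimmed induced subgraph `T^C_trim`,
i.e. `{i ∈ C : anc(i,T) ⊆ C}`. -/
noncomputable def trimN (T : ReferralTree V) (C : Finset V) : Finset V :=
  C.filter (fun i => T.anc i ⊆ C)

/-- `C` induces a trimmed subgraph: `N(T^C_trim) = C`. -/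
def Trimmed (T : ReferralTree V) (C : Finset V) : Prop :=
  T.trimN C = C

/-- `sameTrim T C` : the coalitions whose trimmed induced subgraph coincides
with that of `C`. -/
noncomputable def sameTrim (T : ReferralTree V) (C : Finset V) : Finset (Finset V) :=
  Finset.univ.filter (fun C' => T.trimN C' = T.trimN C)

/-- Adjacency in the tree `T` (the parent relation, symmetrised). -/
def Adj (T : ReferralTree V) (i j : V) : Prop :=
  i ≠ j ∧ (T.parent i = j ∨ T.parent j = i)

/-- `adjSet T C` : the nodes outside `C` adjacent in `T` to some node of `C`. -/
noncomputable def adjSet (T : ReferralTree V) (C : Finset V) : Finset V :=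
  Finset.univ.filter (fun i => i ∉ C ∧ ∃ j ∈ C, T.Adj i j)

/-- `subtree T i` : the node set `N(T_i)` of the subtree of `T` rooted at `i`,
i.e. `i` together with its descendants. -/
noncomputable def subtree (T : ReferralTree V) (i : V) : Finset V :=
  Finset.univ.filter (fun j => j = i ∨ i ∈ T.anc j)

/-- The depth of a node: the number of its ancestors. -/
noncomputable def depth (T : ReferralTree V) (i : V) : ℕ :=
  (T.anc i).card

/-- Given an ordering `π` of the nodes (a bijection with `Fin n`), the set
`C_i^π` of nodes preceding `i` in `π`. -/
noncomputable def precSet (π : V ≃ Fin (Fintype.card V)) (i : V) : Finset V :=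
  Finset.univ.filter (fun j => π j < π i)

/-- The characteristic function of the tree game `(T,f)`:
`v(C) = f(N(T^C_trim))`. -/
noncomputable def gameValue (T : ReferralTree V) (f : Finset V → ℝ) (C : Finset V) : ℝ :=
  f (T.trimN C)

/-- The marginal contribution `mc(i,C) = v(C ∪ {i}) − v(C)` in the tree game
`(T,f)`. -/
noncomputable def mc (T : ReferralTree V) (f : Finset V → ℝ) (i : V) (C : Finset V) : ℝ :=
  T.gameValue f (insert i C) - T.gameValue f C

/-- The Shapley value of player `i` in the tree game `(T,f)`:
`Sh_i = (1/n!) Σ_π mc(i, C_i^π)`. -/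
noncomputable def shapley (T : ReferralTree V) (f : Finset V → ℝ) (i : V) : ℝ :=
  (1 / ((Fintype.card V).factorial : ℝ)) *
    ∑ π : V ≃ Fin (Fintype.card V), T.mc f i (precSet π i)

/-- The characteristic function `f` of a basic tree game: `f(C) = |C|`. -/
noncomputable def basicF : Finset V → ℝ := fun C => (C.card : ℝ)

end ReferralTree

open ReferralTree

section Aux

variable {V : Type*} [Fintype V] [DecidableEq V]

lemma not_mem_anc_self (T : ReferralTree V) (j : V) : j ∉ T.anc j := by
  simp [ReferralTree.anc]

lemma trimN_mono (T : ReferralTree V) {C D : Finset V} (h : C ⊆ D) :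
    T.trimN C ⊆ T.trimN D := by
  intro x hx
  simp only [ReferralTree.trimN, Finset.mem_filter] at hx ⊢
  exact ⟨h hx.1, hx.2.trans h⟩

lemma mc_eq (T : ReferralTree V) (i : V) (C : Finset V) (hiC : i ∉ C) :
    T.mc basicF i C =
      (((T.subtree i).filter (fun j => (insert j (T.anc j)) \ {i} ⊆ C)).card : ℝ) := by
  have hsub : T.trimN C ⊆ T.trimN (insert i C) := trimN_mono T (Finset.subset_insert i C)
  have hdiff : T.trimN (insert i C) \ T.trimN C =
      (T.subtree i).filter (fun j => (insert j (T.anc j)) \ {i} ⊆ C) := by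
    ext j
    simp only [Finset.mem_sdiff, ReferralTree.trimN, ReferralTree.subtree,
      Finset.mem_filter, Finset.mem_univ, true_and, not_and, Finset.mem_insert]
    constructor
    · rintro ⟨⟨hj1, hj2⟩, hj3⟩
      constructor
      · by_cases hji : j = i
        · exact Or.inl hji
        · right
          by_cases hia : i ∈ T.anc j
          · exact hia
          · exfalso
            have hjC : j ∈ C := hj1.resolve_left hji
            refine hj3 hjC (fun x hx => ?_)
            rcases Finset.mem_insert.mp (hj2 hx) with h | h
            · exact absurd (h ▸ hx) hia
            · exact h
      · intro x hx
        rcases Finset.mem_sdiff.mp hx with ⟨hx1, hx2⟩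
        have hxi : x ≠ i := by simpa using hx2
        rcases Finset.mem_insert.mp hx1 with rfl | h
        · exact hj1.resolve_left hxi
        · rcases Finset.mem_insert.mp (hj2 h) with h' | h'
          · exact absurd h' hxi
          · exact h'
    · rintro ⟨hst, hss⟩
      have hmemP : ∀ x, x ∈ insert j (T.anc j) → x ≠ i → x ∈ C := by
        intro x h1 h2
        exact hss (Finset.mem_sdiff.mpr ⟨h1, by simpa using h2⟩)
      refine ⟨⟨?_, ?_⟩, ?_⟩
      · by_cases hji : j = i
        · exact Or.inl hji
        · exact Or.inr (hmemP j (Finset.mem_insert_self _ _) hji)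
      · intro x hx
        by_cases hxi : x = i
        · exact Finset.mem_insert.mpr (Or.inl hxi)
        · exact Finset.mem_insert.mpr (Or.inr (hmemP x (Finset.mem_insert_of_mem hx) hxi))
      · intro hjC hancC
        rcases hst with rfl | hia
        · exact hiC hjC
        · exact hiC (hancC hia)
  have hc := Finset.card_le_card hsub
  simp only [ReferralTree.mc, ReferralTree.gameValue, basicF]
  rw [← hdiff, Finset.card_sdiff_of_subset hsub, Nat.cast_sub hc]

/-- The number of orderings in which `j` is the last element of `S'`. -/
noncomputable def Fcnt (S' : Finset V) (j : V) : ℕ :=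
  ((Finset.univ : Finset (V ≃ Fin (Fintype.card V))).filter
    (fun π => ∀ x ∈ S', π x ≤ π j)).card

lemma Fcnt_sum (S' : Finset V) (hne : S'.Nonempty) :
    ∑ j ∈ S', Fcnt S' j = (Fintype.card V).factorial := by
  have h1 : ∑ j ∈ S', Fcnt S' j =
      ∑ π : V ≃ Fin (Fintype.card V), (S'.filter (fun j => ∀ x ∈ S', π x ≤ π j)).card := by
    simp only [Fcnt, Finset.card_filter]
    rw [Finset.sum_comm]
  rw [h1]
  have h2 : ∀ π : V ≃ Fin (Fintype.card V),
      (S'.filter (fun j => ∀ x ∈ S', π x ≤ π j)).card = 1 := by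
    intro π
    obtain ⟨j0, hj0, hmax⟩ := S'.exists_max_image π hne
    rw [Finset.card_eq_one]
    refine ⟨j0, ?_⟩
    ext j
    simp only [Finset.mem_filter, Finset.mem_singleton]
    constructor
    · rintro ⟨hj, hle⟩
      have h1 : π j0 ≤ π j := hle j0 hj0
      have h2 : π j ≤ π j0 := hmax j hj
      exact π.injective (le_antisymm h2 h1)
    · rintro rfl
      exact ⟨hj0, hmax⟩
  rw [Finset.sum_congr rfl (fun π _ => h2 π), Finset.sum_const, smul_eq_mul, mul_one,
    Finset.card_univ, Fintype.card_equiv (Fintype.equivFin V)]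

lemma Fcnt_const (S' : Finset V) {i j : V} (hi : i ∈ S') (hj : j ∈ S') :
    Fcnt S' j = Fcnt S' i := by
  unfold Fcnt
  apply Finset.card_bij' (fun π _ => (Equiv.swap i j).trans π)
    (fun π _ => (Equiv.swap i j).trans π)
  · intro π hπ
    simp only [Finset.mem_filter, Finset.mem_univ, true_and] at hπ ⊢
    intro x hx
    simp only [Equiv.trans_apply, Equiv.swap_apply_left]
    have hx' : Equiv.swap i j x ∈ S' := by
      rcases eq_or_ne x i with rfl | h1
      · simpa [Equiv.swap_apply_left] using hj
      rcases eq_or_ne x j with rfl | h2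
      · simpa [Equiv.swap_apply_right] using hi
      · rwa [Equiv.swap_apply_of_ne_of_ne h1 h2]
    exact hπ _ hx'
  · intro π hπ
    simp only [Finset.mem_filter, Finset.mem_univ, true_and] at hπ ⊢
    intro x hx
    simp only [Equiv.trans_apply, Equiv.swap_apply_right]
    have hx' : Equiv.swap i j x ∈ S' := by
      rcases eq_or_ne x i with rfl | h1
      · simpa [Equiv.swap_apply_left] using hj
      rcases eq_or_ne x j with rfl | h2
      · simpa [Equiv.swap_apply_right] using hi
      · rwa [Equiv.swap_apply_of_ne_of_ne h1 h2]
    exact hπ _ hx'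
  · intro π _
    ext x
    simp [Equiv.trans_apply, Equiv.swap_apply_self]
  · intro π _
    ext x
    simp [Equiv.trans_apply, Equiv.swap_apply_self]

lemma count_lemma (i : V) (S : Finset V) (hi : i ∉ S) :
    (((Finset.univ : Finset (V ≃ Fin (Fintype.card V))).filter
        (fun π => S ⊆ precSet π i)).card : ℝ) =
      ((Fintype.card V).factorial : ℝ) / ((S.card : ℝ) + 1) := by
  set S' := insert i S with hS'
  have hiS' : i ∈ S' := Finset.mem_insert_self i S
  have hfeq : (Finset.univ : Finset (V ≃ Fin (Fintype.card V))).filter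
      (fun π => S ⊆ precSet π i) =
      (Finset.univ : Finset (V ≃ Fin (Fintype.card V))).filter
      (fun π => ∀ x ∈ S', π x ≤ π i) := by
    apply Finset.filter_congr
    intro π _
    constructor
    · intro h x hx
      rcases Finset.mem_insert.mp hx with rfl | hx'
      · exact le_refl _
      · have := h hx'
        simp only [ReferralTree.precSet, Finset.mem_filter] at this
        exact this.2.le
    · intro h x hx
      simp only [ReferralTree.precSet, Finset.mem_filter, Finset.mem_univ, true_and]
      have hne : π x ≠ π i := fun heq => hi ((π.injective heq) ▸ hx)
      exact lt_of_le_of_ne (h x (Finset.mem_insert_of_mem hx)) hne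
  rw [hfeq]
  have hsum := Fcnt_sum S' ⟨i, hiS'⟩
  have hconst : ∀ j ∈ S', Fcnt S' j = Fcnt S' i := fun j hj => Fcnt_const S' hiS' hj
  rw [Finset.sum_congr rfl hconst, Finset.sum_const, smul_eq_mul] at hsum
  have hcard : S'.card = S.card + 1 := Finset.card_insert_of_notMem hi
  have key : ((S.card : ℝ) + 1) * (Fcnt S' i : ℝ) = ((Fintype.card V).factorial : ℝ) := by
    rw [← hsum, hcard]; push_cast; ring
  have hpos : (S.card : ℝ) + 1 ≠ 0 := by positivity
  have goal : (Fcnt S' i : ℝ) = ((Fintype.card V).factorial : ℝ) / ((S.card : ℝ) + 1) := by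
    field_simp at key ⊢
    linarith [key]
  exact goal

end Aux


/-- In a basic tree game, the Shapley value of node `i` is
`Sh_i = Σ_{j ∈ N(T_i)} 1/(depth(j,T) + 1)`. -/
theorem stmt15 {V : Type*} [Fintype V] [DecidableEq V] (T : ReferralTree V)
    (i : V) :
    T.shapley basicF i = ∑ j ∈ T.subtree i, (1 : ℝ) / ((T.depth j : ℝ) + 1) := by
  have hfac : ((Fintype.card V).factorial : ℝ) ≠ 0 := by
    exact_mod_cast (Fintype.card V).factorial_ne_zero
  unfold ReferralTree.shapley
  have hmc : ∀ π : V ≃ Fin (Fintype.card V),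
      T.mc basicF i (precSet π i) =
        ∑ j ∈ T.subtree i,
          if (insert j (T.anc j)) \ {i} ⊆ precSet π i then (1 : ℝ) else 0 := by
    intro π
    have hiC : i ∉ precSet π i := by simp [ReferralTree.precSet]
    rw [mc_eq T i _ hiC, Finset.card_filter]
    push_cast
    rfl
  rw [Finset.sum_congr rfl (fun π _ => hmc π), Finset.sum_comm]
  have hinner : ∀ j ∈ T.subtree i,
      (∑ π : V ≃ Fin (Fintype.card V),
        if (insert j (T.anc j)) \ {i} ⊆ precSet π i then (1 : ℝ) else 0) =
      ((Fintype.card V).factorial : ℝ) / ((T.depth j : ℝ) + 1) := by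
    intro j hj
    have hiP : i ∈ insert j (T.anc j) := by
      simp only [ReferralTree.subtree, Finset.mem_filter, Finset.mem_univ, true_and] at hj
      rcases hj with rfl | h
      · exact Finset.mem_insert_self _ _
      · exact Finset.mem_insert_of_mem h
    have hiS : i ∉ (insert j (T.anc j)) \ {i} := by simp
    have hScard : ((insert j (T.anc j)) \ {i}).card = T.depth j := by
      rw [Finset.card_sdiff_of_subset (Finset.singleton_subset_iff.mpr hiP), Finset.card_singleton,
        Finset.card_insert_of_notMem (not_mem_anc_self T j)]
      rfl
    rw [Finset.sum_boole, count_lemma i _ hiS, hScard]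
  rw [Finset.sum_congr rfl hinner, Finset.mul_sum]
  apply Finset.sum_congr rfl
  intro j _
  field_simp
end

section
/- Let (T,f) be a basic tree game. For every node i ∈ N(T), the Shapley value of i satisfies Sh_i = Σ_{j=0}^{height(T_i)} |Level_j(T_i)| / (depth(i,T) + j + 1), where T_i is the subtree of T rooted at i, Level_j(T_i) is the set of nodes of T_i at depth j within T_i, and height(T_i) is the maximum depth of a node of T_i. -/
open scoped Classical

open ReferralTree

namespace ReferralTree

section Aux

variable {V : Type*} [Fintype V] [DecidableEq V] (T : ReferralTree V)

lemma mem_anc' {i j : V} : j ∈ T.anc i ↔ j ≠ i ∧ ∃ k : ℕ, T.parent^[k] i = j := by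
  simp [anc]

lemma iterate_root' (m : ℕ) : T.parent^[m] T.root = T.root :=
  Function.iterate_fixed T.parent_root m

lemma eq_root_of_periodic' {x : V} {p : ℕ} (hp : 0 < p) (h : T.parent^[p] x = x) :
    x = T.root := by
  obtain ⟨K, hK⟩ := T.reaches_root x
  have h1 : T.parent^[p * K] x = x := by
    rw [Function.iterate_mul]
    exact Function.iterate_fixed h K
  have h2 : K ≤ p * K := Nat.le_mul_of_pos_left K hp
  have h3 : T.parent^[(p * K - K) + K] x = x := by
    rwa [Nat.sub_add_cancel h2]
  rw [Function.iterate_add_apply, hK, iterate_root'] at h3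
  exact h3.symm

lemma anc_antisymm' {i j : V} (hij : j ∈ T.anc i) (hji : i ∈ T.anc j) : False := by
  rw [mem_anc'] at hij hji
  obtain ⟨hne, k, hk⟩ := hij
  obtain ⟨hne', m, hm⟩ := hji
  have hk1 : 0 < k := by
    rcases Nat.eq_zero_or_pos k with h | h
    · subst h; simp at hk; exact absurd hk.symm hne
    · exact h
  have : T.parent^[m + k] i = i := by
    rw [Function.iterate_add_apply, hk, hm]
  have hi : i = T.root := T.eq_root_of_periodic' (by omega) this
  subst hi
  have : j = T.root := by rw [← hk, iterate_root']
  exact hne this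

lemma anc_subset_anc' {i k : V} (h : i ∈ T.anc k) : T.anc i ⊆ T.anc k := by
  intro a ha
  rw [mem_anc'] at h ha ⊢
  obtain ⟨hik, l, hl⟩ := h
  obtain ⟨hai, m, hm⟩ := ha
  refine ⟨?_, m + l, ?_⟩
  · rintro rfl
    exact T.anc_antisymm' (T.mem_anc'.2 ⟨hik, l, hl⟩) (T.mem_anc'.2 ⟨hai, m, hm⟩)
  · rw [Function.iterate_add_apply, hl, hm]

lemma mem_subtree' {i k : V} : k ∈ T.subtree i ↔ k = i ∨ i ∈ T.anc k := by
  simp [subtree]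

lemma not_mem_anc_self' (k : V) : k ∉ T.anc k := by
  simp [mem_anc']

lemma depth_le_of_mem_subtree' {i k : V} (h : k ∈ T.subtree i) :
    T.depth i ≤ T.depth k := by
  rw [mem_subtree'] at h
  rcases h with rfl | h
  · exact le_rfl
  · have hsub : insert i (T.anc i) ⊆ T.anc k := by
      intro a ha
      rcases Finset.mem_insert.1 ha with rfl | ha
      · exact h
      · exact T.anc_subset_anc' h ha
    have := Finset.card_le_card hsub
    rw [Finset.card_insert_of_notMem (T.not_mem_anc_self' i)] at this
    unfold depth; omega

lemma card_path' (k : V) : (insert k (T.anc k)).card = T.depth k + 1 := by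
  rw [Finset.card_insert_of_notMem (T.not_mem_anc_self' k)]; rfl

/-- Counting lemma: the number of orderings `π` where `a` comes last among the
elements of `S` is `n! / |S|`. -/
lemma count_max' (S : Finset V) {a : V} (ha : a ∈ S) :
    S.card * (Finset.univ.filter
        (fun π : V ≃ Fin (Fintype.card V) => ∀ x ∈ S, x = a ∨ π x < π a)).card
      = (Fintype.card V).factorial := by
  classical
  set n := Fintype.card V with hn
  set F : V → Finset (V ≃ Fin n) :=
    fun b => Finset.univ.filter (fun π : V ≃ Fin n => ∀ x ∈ S, x = b ∨ π x < π b) with hF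
  have hS : S.Nonempty := ⟨a, ha⟩
  have hSim : ∀ π : V ≃ Fin n, (S.image π).Nonempty := fun π => hS.image π
  set m : (V ≃ Fin n) → V := fun π => π.symm ((S.image π).max' (hSim π)) with hm
  have hmS : ∀ π, m π ∈ S := by
    intro π
    have h1 := (S.image π).max'_mem (hSim π)
    obtain ⟨x, hx, hx2⟩ := Finset.mem_image.1 h1
    have : m π = x := by rw [hm]; simp [← hx2]
    rw [this]; exact hx
  have hπm : ∀ π : V ≃ Fin n, π (m π) = (S.image π).max' (hSim π) := by
    intro π; rw [hm]; simp
  have hm_iff : ∀ (π : V ≃ Fin n) (b : V), b ∈ S →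
      (m π = b ↔ ∀ x ∈ S, x = b ∨ π x < π b) := by
    intro π b hb
    constructor
    · rintro rfl x hx
      have hle : π x ≤ π (m π) := by
        rw [hπm]; exact Finset.le_max' _ _ (Finset.mem_image_of_mem π hx)
      rcases lt_or_eq_of_le hle with h | h
      · exact Or.inr h
      · exact Or.inl (π.injective h)
    · intro h
      rcases h (m π) (hmS π) with h1 | h1
      · exact h1
      · have hle : π b ≤ π (m π) := by
          rw [hπm]; exact Finset.le_max' _ _ (Finset.mem_image_of_mem π hb)
        exact absurd h1 (not_lt.2 hle)
  have hsum : ∑ b ∈ S, (F b).card = Fintype.card (V ≃ Fin n) := by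
    rw [← Finset.card_univ,
      Finset.card_eq_sum_card_fiberwise (f := m) (t := S) (fun π _ => hmS π)]
    refine Finset.sum_congr rfl fun b hb => ?_
    congr 1
    ext π
    simp only [Finset.mem_filter, Finset.mem_univ, true_and, hF]
    exact (hm_iff π b hb).symm
  have hcardsame : ∀ b ∈ S, (F b).card = (F a).card := by
    intro b hb
    by_cases hab : b = a
    · subst hab; rfl
    · refine Finset.card_bij' (fun π _ => (Equiv.swap a b).trans π)
        (fun π _ => (Equiv.swap a b).trans π) ?_ ?_ ?_ ?_
      · intro π hπ
        simp only [Finset.mem_filter, Finset.mem_univ, true_and, hF] at hπ ⊢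
        intro x hx
        by_cases hxa : x = a
        · exact Or.inl hxa
        · refine Or.inr ?_
          simp only [Equiv.trans_apply, Equiv.swap_apply_left]
          by_cases hxb : x = b
          · subst hxb
            simp only [Equiv.swap_apply_right]
            rcases hπ a ha with h | h
            · exact absurd h (Ne.symm hab)
            · exact h
          · rw [Equiv.swap_apply_of_ne_of_ne hxa hxb]
            rcases hπ x hx with h | h
            · exact absurd h hxb
            · exact h
      · intro π hπ
        simp only [Finset.mem_filter, Finset.mem_univ, true_and, hF] at hπ ⊢
        intro x hx
        by_cases hxb : x = b
        · exact Or.inl hxb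
        · refine Or.inr ?_
          simp only [Equiv.trans_apply, Equiv.swap_apply_right]
          by_cases hxa : x = a
          · subst hxa
            simp only [Equiv.swap_apply_left]
            rcases hπ b hb with h | h
            · exact absurd h hab
            · exact h
          · rw [Equiv.swap_apply_of_ne_of_ne hxa hxb]
            rcases hπ x hx with h | h
            · exact absurd h hxa
            · exact h
      · intro π hπ
        ext x
        simp [Equiv.trans_apply]
      · intro π hπ
        ext x
        simp [Equiv.trans_apply]
  calc S.card * (F a).card = ∑ _b ∈ S, (F a).card := by
        rw [Finset.sum_const, smul_eq_mul]
    _ = ∑ b ∈ S, (F b).card := (Finset.sum_congr rfl hcardsame).symm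
    _ = Fintype.card (V ≃ Fin n) := hsum
    _ = n.factorial := by
        rw [Fintype.card_equiv (Fintype.equivFin V)]

lemma mem_trimN' {C : Finset V} {k : V} :
    k ∈ T.trimN C ↔ k ∈ C ∧ T.anc k ⊆ C := by
  simp [trimN]

lemma trimN_mono' {C D : Finset V} (h : C ⊆ D) : T.trimN C ⊆ T.trimN D := by
  intro k hk
  rw [mem_trimN'] at hk ⊢
  exact ⟨h hk.1, hk.2.trans h⟩

lemma mc_eq_card' (i : V) (π : V ≃ Fin (Fintype.card V)) :
    T.mc basicF i (precSet π i)
      = (((T.subtree i).filter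
          (fun k => ∀ x ∈ insert k (T.anc k), x = i ∨ π x < π i)).card : ℝ) := by
  classical
  set C := precSet π i with hC
  have hmemC : ∀ x, x ∈ C ↔ π x < π i := by
    intro x; simp [hC, precSet]
  have hiC : i ∉ C := by simp [hmemC]
  have hins : ∀ x, x ∈ insert i C ↔ (x = i ∨ π x < π i) := by
    intro x; simp [Finset.mem_insert, hmemC]
  have h1 : ∀ k, k ∈ T.trimN (insert i C) ↔
      (∀ x ∈ insert k (T.anc k), x = i ∨ π x < π i) := by
    intro k
    rw [mem_trimN']
    constructor
    · rintro ⟨hk, hanc⟩ x hx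
      rcases Finset.mem_insert.1 hx with rfl | hx
      · exact (hins x).1 hk
      · exact (hins x).1 (hanc hx)
    · intro h
      exact ⟨(hins k).2 (h k (Finset.mem_insert_self _ _)),
        fun x hx => (hins x).2 (h x (Finset.mem_insert_of_mem hx))⟩
  have h2 : ∀ k, k ∈ T.trimN C ↔
      ((∀ x ∈ insert k (T.anc k), x = i ∨ π x < π i) ∧ k ∉ T.subtree i) := by
    intro k
    rw [mem_trimN', mem_subtree']
    constructor
    · rintro ⟨hk, hanc⟩
      constructor
      · intro x hx
        rcases Finset.mem_insert.1 hx with rfl | hx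
        · exact Or.inr ((hmemC x).1 hk)
        · exact Or.inr ((hmemC x).1 (hanc hx))
      · rintro (rfl | hik)
        · exact hiC hk
        · exact hiC (hanc hik)
    · rintro ⟨h, hns⟩
      push_neg at hns
      obtain ⟨hki, hik⟩ := hns
      constructor
      · rcases h k (Finset.mem_insert_self _ _) with h' | h'
        · exact absurd h' hki
        · exact (hmemC k).2 h'
      · intro x hx
        rcases h x (Finset.mem_insert_of_mem hx) with h' | h'
        · subst h'; exact absurd hx hik
        · exact (hmemC x).2 h'
  have hsub : T.trimN C ⊆ T.trimN (insert i C) :=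
    T.trimN_mono' (Finset.subset_insert _ _)
  have hsdiff : T.trimN (insert i C) \ T.trimN C
      = (T.subtree i).filter (fun k => ∀ x ∈ insert k (T.anc k), x = i ∨ π x < π i) := by
    ext k
    simp only [Finset.mem_sdiff, h1, h2, Finset.mem_filter, not_and, not_not]
    constructor
    · rintro ⟨hg, h'⟩
      exact ⟨h' hg, hg⟩
    · rintro ⟨hk, hg⟩
      exact ⟨hg, fun _ => hk⟩
  have hcards : (T.trimN (insert i C)).card - (T.trimN C).card
      = ((T.subtree i).filter
          (fun k => ∀ x ∈ insert k (T.anc k), x = i ∨ π x < π i)).card := by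
    rw [← hsdiff, Finset.card_sdiff_of_subset hsub]
  unfold mc gameValue basicF
  rw [← hcards, Nat.cast_sub (Finset.card_le_card hsub)]

end Aux

end ReferralTree

/-- In a basic tree game, the Shapley value of node `i` is
`Sh_i = Σ_{j=0}^{height(T_i)} |Level_j(T_i)| / (depth(i,T) + j + 1)`, where
`Level_j(T_i)` is the set of nodes of `T_i` at depth `j` within `T_i` and
`height(T_i)` is the maximum such depth. -/
theorem stmt16 {V : Type*} [Fintype V] [DecidableEq V] (T : ReferralTree V)
    (i : V) :
    T.shapley basicF i
      = ∑ j ∈ Finset.range ((T.subtree i).sup (fun k => T.depth k - T.depth i) + 1),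
          (((T.subtree i).filter (fun k => T.depth k = T.depth i + j)).card : ℝ) /
            ((T.depth i : ℝ) + (j : ℝ) + 1) := by
  classical
  set n := Fintype.card V with hn
  have hfac : ((n.factorial : ℝ)) ≠ 0 := Nat.cast_ne_zero.2 (Nat.factorial_ne_zero n)
  have h1 : T.shapley basicF i
      = (1 / (n.factorial : ℝ)) * ∑ π : V ≃ Fin n,
          (((T.subtree i).filter
            (fun k => ∀ x ∈ insert k (T.anc k), x = i ∨ π x < π i)).card : ℝ) := by
    unfold shapley
    congr 1
    exact Finset.sum_congr rfl fun π _ => T.mc_eq_card' i π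
  have h2 : ∑ π : V ≃ Fin n, ((T.subtree i).filter
        (fun k => ∀ x ∈ insert k (T.anc k), x = i ∨ π x < π i)).card
      = ∑ k ∈ T.subtree i, (Finset.univ.filter
          (fun π : V ≃ Fin n => ∀ x ∈ insert k (T.anc k), x = i ∨ π x < π i)).card := by
    simp_rw [Finset.card_filter]
    exact Finset.sum_comm
  have h3 : ∀ k ∈ T.subtree i,
      (((Finset.univ.filter (fun π : V ≃ Fin n =>
          ∀ x ∈ insert k (T.anc k), x = i ∨ π x < π i)).card : ℕ) : ℝ)
        = (n.factorial : ℝ) / ((T.depth k : ℝ) + 1) := by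
    intro k hk
    have hiP : i ∈ insert k (T.anc k) := by
      rcases T.mem_subtree'.1 hk with rfl | h
      · exact Finset.mem_insert_self _ _
      · exact Finset.mem_insert_of_mem h
    have hcount := count_max' (insert k (T.anc k)) hiP
    rw [T.card_path' k] at hcount
    have hcast : ((T.depth k : ℝ) + 1) * (((Finset.univ.filter (fun π : V ≃ Fin n =>
        ∀ x ∈ insert k (T.anc k), x = i ∨ π x < π i)).card : ℕ) : ℝ)
        = (n.factorial : ℝ) := by
      exact_mod_cast hcount
    have hne : ((T.depth k : ℝ) + 1) ≠ 0 := by positivity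
    rw [eq_div_iff hne]
    linarith [hcast]
  have h4 : T.shapley basicF i = ∑ k ∈ T.subtree i, 1 / ((T.depth k : ℝ) + 1) := by
    rw [h1, ← Nat.cast_sum, h2, Nat.cast_sum, Finset.mul_sum]
    refine Finset.sum_congr rfl fun k hk => ?_
    rw [h3 k hk]
    field_simp
  rw [h4]
  set H := (T.subtree i).sup (fun k => T.depth k - T.depth i) with hH
  rw [← Finset.sum_fiberwise_of_maps_to
    (g := fun k => T.depth k - T.depth i) (t := Finset.range (H + 1))
    (fun k hk => Finset.mem_range.2 (Nat.lt_succ_of_le (Finset.le_sup (f := fun k => T.depth k - T.depth i) hk)))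
    (fun k => 1 / ((T.depth k : ℝ) + 1))]
  refine Finset.sum_congr rfl fun j hj => ?_
  have hfilter : (T.subtree i).filter (fun k => T.depth k - T.depth i = j)
      = (T.subtree i).filter (fun k => T.depth k = T.depth i + j) := by
    apply Finset.filter_congr
    intro k hk
    have hle := T.depth_le_of_mem_subtree' hk
    constructor <;> intro h <;> omega
  rw [hfilter]
  have hterm : ∀ k ∈ (T.subtree i).filter (fun k => T.depth k = T.depth i + j),
      (1 : ℝ) / ((T.depth k : ℝ) + 1) = 1 / ((T.depth i : ℝ) + (j : ℝ) + 1) := by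
    intro k hk
    have h := (Finset.mem_filter.1 hk).2
    rw [h]
    push_cast
    ring_nf
  rw [Finset.sum_congr rfl hterm, Finset.sum_const, nsmul_eq_mul, mul_one_div]
end
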